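/- arXiv:alg-geom/9503021 — 4 statements merged into one kernel-verified Lean document; each statement's English description precedes it below -/
import Mathlib

section
/- Let E and F be finite dimensional complex vector spaces, and let s : F → E and t : E → F be linear maps with st = θ_E and ts = θ_F for fixed endomorphisms θ_E ∈ End(E), θ_F ∈ End(F). If (a,b) is a pair of linear maps a : F → E, b : E → F satisfying at + sb = 0 and ta + bs = 0 (a Zariski tangent vector to the variety of such pairs (s,t)), and if a = 0 and b∘f(st) = 0, where f is the entire function f(x) = (e^x − 1)/x applied to the endomorphism st, then b = 0. Consequently the differential of the map φ(s,t) = (s, t∘f(st)) is injective on the tangent space of the variety {(s,t) : st = θ_E, ts = θ_F}. -/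
/-!
With `a = 0` the tangent equation `t a + b s = 0` says `b s = 0`, so `b` annihilates every
positive power of `s t`. Only the constant term `1` of `f(s t) = ∑ (s t)^k / (k+1)!` survives,
whence `b f(s t) = b`.
-/

/-- The entire function `f(x) = (e^x - 1)/x = ∑_{k≥0} x^k/(k+1)!` applied to a
square complex matrix. -/
noncomputable def matF {n : ℕ} (A : Matrix (Fin n) (Fin n) ℂ) :
    Matrix (Fin n) (Fin n) ℂ :=
  ∑' k : ℕ, (((k + 1).factorial : ℂ))⁻¹ • A ^ k

theorem summable_inv_factorial_succ_smul_pow {𝕜 A : Type*} [RCLike 𝕜] [NormedRing A]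
    [NormedAlgebra 𝕜 A] [CompleteSpace A] (x : A) :
    Summable fun k : ℕ => (((k + 1).factorial : 𝕜))⁻¹ • x ^ k := by
  refine .of_norm_bounded_eventually_nat (Real.summable_pow_div_factorial ‖x‖) ?_
  filter_upwards [Filter.eventually_ge_atTop 1] with k hk
  have hfac : (((k + 1).factorial : ℝ))⁻¹ ≤ ((k.factorial : ℝ))⁻¹ :=
    inv_anti₀ (by positivity) (by exact_mod_cast Nat.factorial_le k.le_succ)
  calc ‖(((k + 1).factorial : 𝕜))⁻¹ • x ^ k‖
      ≤ (((k + 1).factorial : ℝ))⁻¹ * ‖x ^ k‖ := by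
        refine (norm_smul_le _ _).trans_eq ?_
        rw [norm_inv, RCLike.norm_natCast]
    _ ≤ ((k.factorial : ℝ))⁻¹ * ‖x‖ ^ k :=
        mul_le_mul hfac (norm_pow_le' x hk) (norm_nonneg _) (by positivity)
    _ = ‖x‖ ^ k / k.factorial := inv_mul_eq_div _ _

theorem Matrix.mul_tsum_smul_pow_of_mul_eq_zero {l m R : Type*} [Fintype m] [DecidableEq m]
    [CommSemiring R] [TopologicalSpace R] [IsTopologicalSemiring R] [T2Space R]
    {b : Matrix l m R} {A : Matrix m m R} (hbA : b * A = 0) {c : ℕ → R}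
    (hc : Summable fun k => c k • A ^ k) :
    b * ∑' k, c k • A ^ k = c 0 • b := by
  have hterm : (fun k => b * (c k • A ^ k)) = Pi.single 0 (c 0 • b) := by
    funext k
    rcases k with _ | k
    · simp
    · rw [Matrix.mul_smul, pow_succ', ← Matrix.mul_assoc, hbA, Matrix.zero_mul, smul_zero,
        Pi.single_eq_of_ne k.succ_ne_zero]
  have hmul := hc.hasSum.map (mulLeftLinearMap m R b)
    (continuous_const.matrix_mul continuous_id)
  simp only [Function.comp_def, mulLeftLinearMap_apply] at hmul
  rw [hterm] at hmul
  exact hmul.unique (hasSum_pi_single 0 _)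

section LinftyOpNorm

attribute [local instance] Matrix.linftyOpNormedRing Matrix.linftyOpNormedAlgebra

theorem mul_matF_eq_self_of_mul_eq_zero {m n : ℕ} {s : Matrix (Fin m) (Fin n) ℂ}
    (t : Matrix (Fin n) (Fin m) ℂ) {b : Matrix (Fin n) (Fin m) ℂ} (hbs : b * s = 0) :
    b * matF (s * t) = b := by
  have hbA : b * (s * t) = 0 := by rw [← Matrix.mul_assoc, hbs, Matrix.zero_mul]
  rw [matF, Matrix.mul_tsum_smul_pow_of_mul_eq_zero hbA (summable_inv_factorial_succ_smul_pow _)]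
  simp

end LinftyOpNorm

theorem dphi_injective_on_tangent_space_general {m n : ℕ}
    (s : Matrix (Fin m) (Fin n) ℂ) (t : Matrix (Fin n) (Fin m) ℂ)
    (a : Matrix (Fin m) (Fin n) ℂ) (b : Matrix (Fin n) (Fin m) ℂ)
    (htan₂ : t * a + b * s = 0)
    (ha : a = 0) (hb : b * matF (s * t) = 0) :
    b = 0 ∧
    ∀ (a' : Matrix (Fin m) (Fin n) ℂ) (b' : Matrix (Fin n) (Fin m) ℂ),
      a' * t + s * b' = 0 → t * a' + b' * s = 0 →
      a' = 0 → b' * matF (s * t) = 0 → a' = 0 ∧ b' = 0 := by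
  have b_eq_zero : ∀ (a' : Matrix (Fin m) (Fin n) ℂ) (b' : Matrix (Fin n) (Fin m) ℂ),
      t * a' + b' * s = 0 → a' = 0 → b' * matF (s * t) = 0 → b' = 0 := by
    rintro a' b' htan rfl hb'
    rw [Matrix.mul_zero, zero_add] at htan
    rwa [mul_matF_eq_self_of_mul_eq_zero t htan] at hb'
  exact ⟨b_eq_zero a b htan₂ ha hb, fun a' b' _ htan₂' ha' hb' => ⟨ha', b_eq_zero a' b' htan₂' ha' hb'⟩⟩

/-- Rigidity lemma: with `s t = θ_E`, `t s = θ_F`, if `(a,b)` is a Zariski tangent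
vector to the variety `{(s,t) : st = θ_E, ts = θ_F}` (i.e. `a t + s b = 0` and
`t a + b s = 0`) with `a = 0` and `b ∘ f(st) = 0`, then `b = 0`; consequently the
differential of `φ(s,t) = (s, t ∘ f(st))` is injective on the tangent space. -/
theorem dphi_injective_on_tangent_space {m n : ℕ}
    (θE : Matrix (Fin m) (Fin m) ℂ) (θF : Matrix (Fin n) (Fin n) ℂ)
    (s : Matrix (Fin m) (Fin n) ℂ) (t : Matrix (Fin n) (Fin m) ℂ)
    (hst : s * t = θE) (hts : t * s = θF)
    (a : Matrix (Fin m) (Fin n) ℂ) (b : Matrix (Fin n) (Fin m) ℂ)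
    (htan₁ : a * t + s * b = 0) (htan₂ : t * a + b * s = 0)
    (ha : a = 0) (hb : b * matF (s * t) = 0) :
    b = 0 ∧
    ∀ (a' : Matrix (Fin m) (Fin n) ℂ) (b' : Matrix (Fin n) (Fin m) ℂ),
      a' * t + s * b' = 0 → t * a' + b' * s = 0 →
      a' = 0 → b' * matF (s * t) = 0 → a' = 0 ∧ b' = 0 :=
  dphi_injective_on_tangent_space_general s t a b htan₂ ha hb
end

section
/- Let u be an endomorphism of a finite dimensional complex vector space V, and assume the eigenvalues of u do not differ by nonzero integers and 0 is the only possible integral eigenvalue of u. Then the endomorphism f(u), where f(x) = (e^{-2πi x} − 1)/x (with f(0) = −2πi), is invertible on the generalized 0-eigenspace of u, and e^{-2πi u} − 1 = u ∘ f(u). -/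
open Complex Matrix

/-- The matrix exponential, `exp(A) = ∑_{k≥0} A^k/k!`. -/
noncomputable def matExp {n : ℕ} (A : Matrix (Fin n) (Fin n) ℂ) :
    Matrix (Fin n) (Fin n) ℂ :=
  ∑' k : ℕ, ((k.factorial : ℂ))⁻¹ • A ^ k

/-- The entire function `f(x) = (e^{-2πi x} - 1)/x = ∑_{k≥0} (-2πi)^{k+1} x^k/(k+1)!`
(so `f(0) = -2πi`) applied to a square complex matrix. -/
noncomputable def matG {n : ℕ} (A : Matrix (Fin n) (Fin n) ℂ) :
    Matrix (Fin n) (Fin n) ℂ :=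
  ∑' k : ℕ, ((-(2 * (Real.pi : ℂ) * I)) ^ (k + 1) / ((k + 1).factorial : ℂ)) • A ^ k

namespace MatGAux

attribute [local instance] Matrix.linftyOpNormedRing Matrix.linftyOpNormedAlgebra

noncomputable def c : ℂ := -(2 * (Real.pi : ℂ) * I)

lemma c_ne_zero : c ≠ 0 := by
  simp [c, Real.pi_ne_zero, I_ne_zero, Complex.ofReal_ne_zero]

variable {n : ℕ} (u : Matrix (Fin n) (Fin n) ℂ)

lemma summable_g :
    Summable (fun k : ℕ => (c ^ (k + 1) / ((k + 1).factorial : ℂ)) • u ^ k) := by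
  apply Summable.of_norm_bounded_eventually_nat
    (g := fun k => ‖c‖ * ((‖c‖ * ‖u‖) ^ k / k.factorial))
    ((Real.summable_pow_div_factorial _).mul_left _)
  filter_upwards [Filter.eventually_ge_atTop 1] with k hk
  rw [norm_smul]
  have h1 : ‖u ^ k‖ ≤ ‖u‖ ^ k := norm_pow_le' u hk
  have h2 : ‖c ^ (k + 1) / ((k + 1).factorial : ℂ)‖
      = ‖c‖ ^ (k + 1) / ((k + 1).factorial : ℝ) := by
    rw [norm_div, norm_pow]
    norm_num
  rw [h2]
  calc ‖c‖ ^ (k + 1) / ((k + 1).factorial : ℝ) * ‖u ^ k‖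
      ≤ ‖c‖ ^ (k + 1) / (k.factorial : ℝ) * ‖u‖ ^ k := by
        gcongr
        exact Nat.le_succ k
    _ = ‖c‖ * ((‖c‖ * ‖u‖) ^ k / k.factorial) := by
        rw [pow_succ, mul_pow]; ring

lemma mulVec_matG (x : Fin n → ℂ) :
    (matG u) *ᵥ x = ∑' k : ℕ, (c ^ (k + 1) / ((k + 1).factorial : ℂ)) • ((u ^ k) *ᵥ x) := by
  let L : Matrix (Fin n) (Fin n) ℂ →ₗ[ℂ] (Fin n → ℂ) :=
    { toFun := fun A => A *ᵥ x
      map_add' := fun A B => Matrix.add_mulVec A B x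
      map_smul' := fun a A => Matrix.smul_mulVec a A x }
  have hL : Continuous L := L.continuous_of_finiteDimensional
  have := ContinuousLinearMap.map_tsum ⟨L, hL⟩ (summable_g u)
  simpa [matG, L, c, Matrix.smul_mulVec] using this

lemma pow_mulVec_zero_mono {m : ℕ} {x : Fin n → ℂ} (hm : (u ^ m) *ᵥ x = 0)
    {k : ℕ} (h : m ≤ k) : (u ^ k) *ᵥ x = 0 := by
  have hk : u ^ k = u ^ (k - m) * u ^ m := by rw [← pow_add]; congr 1; omega
  rw [hk, ← Matrix.mulVec_mulVec, hm, Matrix.mulVec_zero]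

lemma matG_trunc {m : ℕ} {x : Fin n → ℂ} (hm : (u ^ m) *ᵥ x = 0) :
    (matG u) *ᵥ x
      = ∑ k ∈ Finset.range m, (c ^ (k + 1) / ((k + 1).factorial : ℂ)) • ((u ^ k) *ᵥ x) := by
  rw [mulVec_matG]
  refine tsum_eq_sum ?_
  intro k hk
  rw [Finset.mem_range, not_lt] at hk
  rw [pow_mulVec_zero_mono u hm hk, smul_zero]

lemma toLin'_pow_apply (k : ℕ) (x : Fin n → ℂ) :
    (Matrix.toLin' u ^ k) x = (u ^ k) *ᵥ x := by
  induction k generalizing x with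
  | zero => simp [Matrix.one_mulVec]
  | succ k ih =>
    calc (Matrix.toLin' u ^ (k + 1)) x
        = (Matrix.toLin' u ^ k) (Matrix.toLin' u x) := by
          rw [pow_succ, Module.End.mul_apply]
      _ = (u ^ k) *ᵥ (u *ᵥ x) := by rw [ih, Matrix.toLin'_apply]
      _ = (u ^ (k + 1)) *ᵥ x := by rw [Matrix.mulVec_mulVec, ← pow_succ]

lemma inj_aux : ∀ (m : ℕ) (x : Fin n → ℂ),
    (u ^ m) *ᵥ x = 0 → (matG u) *ᵥ x = 0 → x = 0 := by
  intro m
  induction m with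
  | zero =>
    intro x h0 _
    simpa [Matrix.one_mulVec] using h0
  | succ m ih =>
    intro x hm hg
    refine ih x ?_ hg
    have hsum := (matG_trunc u hm).symm.trans hg
    have h2 : (u ^ m) *ᵥ (∑ k ∈ Finset.range (m + 1),
        (c ^ (k + 1) / ((k + 1).factorial : ℂ)) • ((u ^ k) *ᵥ x)) = 0 := by
      rw [hsum, Matrix.mulVec_zero]
    have h3 : ∀ k : ℕ, (u ^ m) *ᵥ ((c ^ (k + 1) / ((k + 1).factorial : ℂ)) • ((u ^ k) *ᵥ x))
        = (c ^ (k + 1) / ((k + 1).factorial : ℂ)) • ((u ^ (m + k)) *ᵥ x) := by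
      intro k
      rw [Matrix.mulVec_smul, Matrix.mulVec_mulVec, ← pow_add]
    have hms : (u ^ m) *ᵥ (∑ k ∈ Finset.range (m + 1),
        (c ^ (k + 1) / ((k + 1).factorial : ℂ)) • ((u ^ k) *ᵥ x))
        = ∑ k ∈ Finset.range (m + 1),
          (u ^ m) *ᵥ ((c ^ (k + 1) / ((k + 1).factorial : ℂ)) • ((u ^ k) *ᵥ x)) := by
      simpa only [Matrix.mulVecLin_apply] using map_sum (u ^ m).mulVecLin
        (fun k => (c ^ (k + 1) / ((k + 1).factorial : ℂ)) • ((u ^ k) *ᵥ x))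
        (Finset.range (m + 1))
    rw [hms] at h2
    simp only [h3] at h2
    rw [Finset.sum_eq_single_of_mem 0 (Finset.mem_range.2 (Nat.succ_pos m))] at h2
    · have : (c : ℂ) ≠ 0 := c_ne_zero
      have h4 : (c ^ (0 + 1) / ((0 + 1).factorial : ℂ)) ≠ 0 := by
        simpa using this
      have := h2
      rw [smul_eq_zero] at this
      rcases this with h | h
      · exact absurd h h4
      · simpa using h
    · intro b _ hb
      have hb1 : m + 1 ≤ m + b := by omega
      rw [pow_mulVec_zero_mono u hm hb1, smul_zero]

lemma maps_to (x : Fin n → ℂ) (hx : x ∈ Module.End.maxGenEigenspace (Matrix.toLin' u) 0) :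
    Matrix.toLin' (matG u) x ∈ Module.End.maxGenEigenspace (Matrix.toLin' u) 0 := by
  rw [Module.End.mem_maxGenEigenspace] at hx ⊢
  obtain ⟨k, hk⟩ := hx
  simp only [zero_smul, sub_zero] at hk ⊢
  have hk' : (u ^ k) *ᵥ x = 0 := by
    rw [toLin'_pow_apply] at hk
    exact hk
  refine ⟨k, ?_⟩
  rw [toLin'_pow_apply, Matrix.toLin'_apply]
  rw [matG_trunc u hk']
  have hms : (u ^ k) *ᵥ (∑ j ∈ Finset.range k,
      (c ^ (j + 1) / ((j + 1).factorial : ℂ)) • ((u ^ j) *ᵥ x))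
      = ∑ j ∈ Finset.range k,
        (u ^ k) *ᵥ ((c ^ (j + 1) / ((j + 1).factorial : ℂ)) • ((u ^ j) *ᵥ x)) := by
    simpa only [Matrix.mulVecLin_apply] using map_sum (u ^ k).mulVecLin
      (fun j => (c ^ (j + 1) / ((j + 1).factorial : ℂ)) • ((u ^ j) *ᵥ x))
      (Finset.range k)
  rw [hms]
  refine Finset.sum_eq_zero ?_
  intro j _
  rw [Matrix.mulVec_smul, Matrix.mulVec_mulVec, ← pow_add,
    pow_mulVec_zero_mono u hk' (Nat.le_add_right k j), smul_zero]

end MatGAux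

open MatGAux in
/-- If no two eigenvalues of `u` differ by a nonzero integer and `0` is the only
possible integral eigenvalue of `u`, then `f(u)` with `f(x) = (e^{-2πi x} - 1)/x`
is invertible on the generalized `0`-eigenspace of `u`, and
`e^{-2πi u} - 1 = u ∘ f(u)`. -/
theorem matG_invertible_on_gen_zero_eigenspace {n : ℕ}
    (u : Matrix (Fin n) (Fin n) ℂ)
    (hdiff : ∀ μ ∈ spectrum ℂ u, ∀ ν ∈ spectrum ℂ u, (∃ k : ℤ, μ - ν = (k : ℂ)) → μ = ν)
    (hint : ∀ μ ∈ spectrum ℂ u, (∃ k : ℤ, μ = (k : ℂ)) → μ = 0) :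
    (∀ x ∈ Module.End.maxGenEigenspace (Matrix.toLin' u) 0,
        Matrix.toLin' (matG u) x = 0 → x = 0) ∧
    (∀ y ∈ Module.End.maxGenEigenspace (Matrix.toLin' u) 0,
        ∃ x ∈ Module.End.maxGenEigenspace (Matrix.toLin' u) 0, Matrix.toLin' (matG u) x = y) ∧
    matExp ((-(2 * (Real.pi : ℂ) * I)) • u) - 1 = u * matG u := by
  have hinj : ∀ x ∈ Module.End.maxGenEigenspace (Matrix.toLin' u) 0,
      Matrix.toLin' (matG u) x = 0 → x = 0 := by
    intro x hx hgx
    rw [Module.End.mem_maxGenEigenspace] at hx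
    obtain ⟨k, hk⟩ := hx
    simp only [zero_smul, sub_zero] at hk
    have hk' : (u ^ k) *ᵥ x = 0 := by
      rw [toLin'_pow_apply] at hk
      exact hk
    rw [Matrix.toLin'_apply] at hgx
    exact inj_aux u k x hk' hgx
  refine ⟨hinj, ?_, ?_⟩
  · -- surjectivity
    set W := Module.End.maxGenEigenspace (Matrix.toLin' u) 0 with hW
    let e : W →ₗ[ℂ] W := (Matrix.toLin' (matG u)).restrict (fun x hx => maps_to u x hx)
    have he : Function.Injective e := by
      intro a b hab
      have : Matrix.toLin' (matG u) ((a : Fin n → ℂ) - b) = 0 := by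
        have h5 := congrArg (Subtype.val) hab
        simp only [e, LinearMap.restrict_apply] at h5
        rw [map_sub, h5, sub_self]
      have hmem : ((a : Fin n → ℂ) - b) ∈ W := W.sub_mem a.2 b.2
      have := hinj _ hmem this
      exact Subtype.ext (by rwa [sub_eq_zero] at this)
    have hsurj : Function.Surjective e :=
      (LinearMap.injective_iff_surjective).mp he
    intro y hy
    obtain ⟨x, hx⟩ := hsurj ⟨y, hy⟩
    refine ⟨x, x.2, ?_⟩
    have := congrArg Subtype.val hx
    simpa [e, LinearMap.restrict_apply] using this
  · -- the identity
    letI : NormedRing (Matrix (Fin n) (Fin n) ℂ) := Matrix.linftyOpNormedRing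
    letI : NormedAlgebra ℂ (Matrix (Fin n) (Fin n) ℂ) := Matrix.linftyOpNormedAlgebra
    have hb : Summable (fun k : ℕ => ((k.factorial : ℂ))⁻¹ • (c • u) ^ k) :=
      NormedSpace.expSeries_summable' (𝕂 := ℂ) (c • u)
    have hbk : ∀ k : ℕ, ((k + 1).factorial : ℂ)⁻¹ • (c • u) ^ (k + 1)
        = (c ^ (k + 1) / ((k + 1).factorial : ℂ)) • u ^ (k + 1) := by
      intro k
      rw [smul_pow, smul_smul, div_eq_mul_inv, mul_comm]
    have hexp : matExp (c • u) - 1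
        = ∑' k : ℕ, (c ^ (k + 1) / ((k + 1).factorial : ℂ)) • u ^ (k + 1) := by
      have h0 : matExp (c • u)
          = (((0 : ℕ).factorial : ℂ))⁻¹ • (c • u) ^ 0
            + ∑' k : ℕ, (((k + 1).factorial : ℂ))⁻¹ • (c • u) ^ (k + 1) :=
        Summable.tsum_eq_zero_add hb
      rw [matExp] at h0 ⊢
      rw [h0]
      simp only [pow_zero, Nat.factorial_zero, Nat.cast_one, inv_one, one_smul]
      rw [add_sub_cancel_left]
      exact tsum_congr hbk
    have hmul : u * matG u
        = ∑' k : ℕ, (c ^ (k + 1) / ((k + 1).factorial : ℂ)) • u ^ (k + 1) := by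
      let L : Matrix (Fin n) (Fin n) ℂ →ₗ[ℂ] Matrix (Fin n) (Fin n) ℂ :=
        LinearMap.mulLeft ℂ u
      have hL : Continuous L := L.continuous_of_finiteDimensional
      have hmt := ContinuousLinearMap.map_tsum ⟨L, hL⟩ (summable_g u)
      have : u * matG u = ∑' k : ℕ,
          u * ((c ^ (k + 1) / ((k + 1).factorial : ℂ)) • u ^ k) := by
        simpa [matG, L, c, LinearMap.mulLeft_apply] using hmt
      rw [this]
      refine tsum_congr fun k => ?_
      rw [mul_smul_comm, ← pow_succ']
    show matExp (c • u) - 1 = u * matG u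
    rw [hexp, hmul]
end

section
/- Let E and F be finite dimensional complex vector spaces with endomorphisms θ_E, θ_F, and let s : F → E, t : E → F satisfy st = θ_E, ts = θ_F. Set C = t ∘ g(θ_E) where g(x) = (e^{-2πi x} − 1)/x (entire, g(0) = −2πi), and V = s. Then V C = exp(−2πi θ_E) − id on E and C V = exp(−2πi θ_F) − id on F. -/
open Complex

/-!
With `c = -2πi` and `g(x) = ∑ c^(k+1)/(k+1)! x^k`, the power series `x g(x)` is `exp(cx) - 1`
term by term. Hence `VC = st g(st) = exp(c θ_E) - 1`, and, since `t (st)^k s = (ts)^(k+1)`,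
`CV = t g(st) s = (ts) g(ts) = exp(c θ_F) - 1`.
-/

open scoped Nat
open NormedSpace

section ExpSeries

variable {𝔸 : Type*} [NormedRing 𝔸] [NormedAlgebra ℂ 𝔸] [CompleteSpace 𝔸] (c : ℂ) (x : 𝔸)

theorem summable_expSeries_div_succ :
    Summable fun k : ℕ => (c ^ (k + 1) / (k + 1)! : ℂ) • x ^ k := by
  refine .of_norm_bounded ((norm_expSeries_summable' (𝕂 := ℂ) (c • x)).mul_left ‖c‖) fun k ↦ ?_
  have hterm : (c ^ (k + 1) / (k + 1)! : ℂ) • x ^ k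
      = c • ((k + 1 : ℂ)⁻¹ • ((k !⁻¹ : ℂ) • (c • x) ^ k)) := by
    rw [smul_pow, smul_smul, smul_smul, smul_smul, Nat.factorial_succ]
    congr 1
    push_cast
    field_simp
    ring
  have hle : ‖(k + 1 : ℂ)⁻¹‖ ≤ 1 := by
    rw [norm_inv]
    exact inv_le_one_of_one_le₀ (by exact_mod_cast (le_add_self : 1 ≤ k + 1))
  rw [hterm, norm_smul, norm_smul]
  gcongr
  exact mul_le_of_le_one_left (norm_nonneg _) hle

theorem hasSum_expSeries_succ :
    HasSum (fun k : ℕ => (c ^ (k + 1) / (k + 1)! : ℂ) • x ^ (k + 1)) (exp (c • x) - 1) := by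
  have h := exp_series_hasSum_exp' (𝕂 := ℂ) (c • x)
  rw [← hasSum_nat_add_iff' 1] at h
  simpa [smul_pow, smul_smul, div_eq_inv_mul] using h

end ExpSeries

section MatrixMul

variable {ι l m n R : Type*} [Fintype m] [NonUnitalNonAssocSemiring R] [TopologicalSpace R]
  [IsTopologicalSemiring R]

theorem HasSum.matrix_mul_left {f : ι → Matrix m n R} {a : Matrix m n R}
    (t : Matrix l m R) (hf : HasSum f a) : HasSum (fun i ↦ t * f i) (t * a) :=
  hf.map (Matrix.addMonoidHomMulLeft t) (continuous_const.matrix_mul continuous_id)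

theorem HasSum.matrix_mul_right {f : ι → Matrix l m R} {a : Matrix l m R}
    (s : Matrix m n R) (hf : HasSum f a) : HasSum (fun i ↦ f i * s) (a * s) :=
  hf.map (Matrix.addMonoidHomMulRight s) (continuous_id.matrix_mul continuous_const)

end MatrixMul

theorem Matrix.mul_pow_mul_comm {m n R : Type*} [Fintype m] [Fintype n] [DecidableEq m]
    [DecidableEq n] [Semiring R] (s : Matrix m n R) (t : Matrix n m R) (k : ℕ) :
    t * (s * t) ^ k = (t * s) ^ k * t := by
  induction k with
  | zero => simp
  | succ k ih =>
    rw [pow_succ, ← Matrix.mul_assoc, ih, Matrix.mul_assoc, ← Matrix.mul_assoc t s t,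
      ← Matrix.mul_assoc, ← pow_succ]

theorem matExp_eq_exp {n : ℕ} (A : Matrix (Fin n) (Fin n) ℂ) : matExp A = exp A := by
  rw [exp_eq_tsum ℂ]
  rfl

section MatG

attribute [local instance] Matrix.linftyOpNormedAddCommGroup Matrix.linftyOpNormedRing
  Matrix.linftyOpNormedAlgebra

theorem hasSum_matG {n : ℕ} (A : Matrix (Fin n) (Fin n) ℂ) :
    HasSum (fun k : ℕ => ((-(2 * (Real.pi : ℂ) * I)) ^ (k + 1) / (k + 1)! : ℂ) • A ^ k)
      (matG A) :=
  (summable_expSeries_div_succ _ A).hasSum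

theorem mul_matG {n : ℕ} (A : Matrix (Fin n) (Fin n) ℂ) :
    A * matG A = matExp (-(2 * (Real.pi : ℂ) * I) • A) - 1 := by
  rw [matExp_eq_exp]
  refine ((hasSum_matG A).mul_left A).unique ?_
  simp only [mul_smul_comm, ← pow_succ']
  exact hasSum_expSeries_succ _ A

theorem mul_matG_mul {m n : ℕ} (s : Matrix (Fin m) (Fin n) ℂ) (t : Matrix (Fin n) (Fin m) ℂ) :
    t * matG (s * t) * s = matExp (-(2 * (Real.pi : ℂ) * I) • (t * s)) - 1 := by
  rw [matExp_eq_exp]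
  refine (((hasSum_matG (s * t)).matrix_mul_left t).matrix_mul_right s).unique ?_
  simp only [Matrix.mul_smul, Matrix.smul_mul, Matrix.mul_pow_mul_comm, Matrix.mul_assoc,
    ← pow_succ]
  exact hasSum_expSeries_succ _ (t * s)

end MatG

/-- From pre-D-module data `(s,t)` with `st = θ_E`, `ts = θ_F`, the maps
`C = t ∘ g(θ_E)` and `V = s` satisfy the Malgrange/Verdier relations
`V C = exp(-2πi θ_E) - id` and `C V = exp(-2πi θ_F) - id`. -/
theorem malgrange_relations_from_preD {m n : ℕ}
    (θE : Matrix (Fin m) (Fin m) ℂ) (θF : Matrix (Fin n) (Fin n) ℂ)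
    (s : Matrix (Fin m) (Fin n) ℂ) (t : Matrix (Fin n) (Fin m) ℂ)
    (hst : s * t = θE) (hts : t * s = θF)
    (C : Matrix (Fin n) (Fin m) ℂ) (V : Matrix (Fin m) (Fin n) ℂ)
    (hC : C = t * matG θE) (hV : V = s) :
    V * C = matExp ((-(2 * (Real.pi : ℂ) * I)) • θE) - 1 ∧
    C * V = matExp ((-(2 * (Real.pi : ℂ) * I)) • θF) - 1 := by
  rw [hV, hC, ← hst, ← hts, ← Matrix.mul_assoc]
  exact ⟨mul_matG (s * t), mul_matG_mul s t⟩
end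

section
/- Let V, W be finite dimensional vector spaces over an infinite field k, and let the multiplicative group k* act on V × W by λ·(v,w) = (λv, λ^{-1}w). Then the ring of k*-invariant polynomial functions on V × W is generated by the bilinear functions (v,w) ↦ ξ(v)·η(w) for ξ ∈ V*, η ∈ W*; equivalently, the invariant ring is the image of Sym((V ⊗ W)*) under the pullback along the tensor map V × W → V ⊗ W. -/
/-!
Invariance says `f(c v, w) = f(v, c w)` for `c ≠ 0`. Comparing coefficients of these two rescaled
polynomials gives `c ^ |a| = c ^ |b|` for every monomial `x^a y^b` of `f` and every `c ≠ 0`; over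
an infinite field this forces `|a| = |b|`, and a monomial of bidegree `(N, N)` is a product of `N`
bilinear monomials `x_i y_j`.
-/

open MvPolynomial Finsupp

theorem eq_of_forall_pow_eq_pow {K : Type*} [Field K] [Infinite K] {a b : ℕ}
    (h : ∀ c : K, c ≠ 0 → c ^ a = c ^ b) : a = b := by
  have hX : (Polynomial.X ^ a : Polynomial K) = Polynomial.X ^ b :=
    Polynomial.eq_of_infinite_eval_eq _ _ <|
      (Set.finite_singleton (0 : K)).infinite_compl.mono fun c hc => by simpa using h c hc
  simpa using congrArg Polynomial.natDegree hX

namespace Finsupp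

theorem prod_pow_pow_eq_pow_weight {σ M : Type*} [CommMonoid M] (c : M) (w : σ → ℕ)
    (d : σ →₀ ℕ) : (d.prod fun s e => (c ^ w s) ^ e) = c ^ weight w d := by
  simp only [← pow_mul, weight_apply, Finsupp.prod, Finsupp.sum, Finset.prod_pow_eq_pow_sum,
    smul_eq_mul, mul_comm]

theorem exists_ne_zero_of_weight_ne_zero {σ M : Type*} [AddCommMonoid M] {w : σ → M}
    {d : σ →₀ ℕ} (h : weight w d ≠ 0) : ∃ s, d s ≠ 0 ∧ w s ≠ 0 := by
  obtain ⟨s, -, hs⟩ := Finset.exists_ne_zero_of_sum_ne_zero h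
  exact ⟨s, fun h0 => hs (by simp [h0]), fun h0 => hs (by simp [h0])⟩

variable {ι κ : Type*}

theorem exists_inl_ne_zero_of_weight_ne_zero {d : ι ⊕ κ →₀ ℕ}
    (h : weight (Sum.elim 1 0 : ι ⊕ κ → ℕ) d ≠ 0) : ∃ i, d (.inl i) ≠ 0 := by
  obtain ⟨i | j, hd, hw⟩ := exists_ne_zero_of_weight_ne_zero h
  · exact ⟨i, hd⟩
  · exact absurd rfl hw

theorem exists_inr_ne_zero_of_weight_ne_zero {d : ι ⊕ κ →₀ ℕ}
    (h : weight (Sum.elim 0 1 : ι ⊕ κ → ℕ) d ≠ 0) : ∃ j, d (.inr j) ≠ 0 := by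
  obtain ⟨i | j, hd, hw⟩ := exists_ne_zero_of_weight_ne_zero h
  · exact absurd rfl hw
  · exact ⟨j, hd⟩

end Finsupp

namespace MvPolynomial

section Rescaling

variable {σ R : Type*} [CommSemiring R]

theorem bind₁_C_mul_X_monomial (u : σ → R) (d : σ →₀ ℕ) (a : R) :
    bind₁ (fun s => C (u s) * X s) (monomial d a) =
      monomial d ((d.prod fun s e => u s ^ e) * a) := by
  rw [← aeval_eq_bind₁, aeval_monomial, monomial_eq, map_mul, ← C_eq_algebraMap]
  simp only [mul_pow, Finsupp.prod_mul, ← map_pow, ← map_finsuppProd]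
  ring

theorem coeff_bind₁_C_mul_X (u : σ → R) (f : MvPolynomial σ R) (d : σ →₀ ℕ) :
    coeff d (bind₁ (fun s => C (u s) * X s) f) = (d.prod fun s e => u s ^ e) * coeff d f := by
  classical
  induction f using MvPolynomial.induction_on' with
  | monomial d' a =>
    rw [bind₁_C_mul_X_monomial, coeff_monomial, coeff_monomial]
    split_ifs with h
    · rw [h]
    · rw [mul_zero]
  | add p q hp hq => rw [map_add, coeff_add, coeff_add, hp, hq, mul_add]

theorem eval_bind₁_C_mul_X (u x : σ → R) (f : MvPolynomial σ R) :
    eval x (bind₁ (fun s => C (u s) * X s) f) = eval (fun s => u s * x s) f :=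
  (eval₂Hom_bind₁ _ _ _ f).trans (by simp)

theorem weight_eq_of_eval_pow_mul_eq {K : Type*} [Field K] [Infinite K] {f : MvPolynomial σ K}
    {w₁ w₂ : σ → ℕ}
    (h : ∀ c : K, c ≠ 0 → ∀ x : σ → K,
      eval (fun s => c ^ w₁ s * x s) f = eval (fun s => c ^ w₂ s * x s) f)
    {d : σ →₀ ℕ} (hd : d ∈ f.support) : weight w₁ d = weight w₂ d := by
  refine eq_of_forall_pow_eq_pow fun c hc => mul_right_cancel₀ (mem_support_iff.mp hd) ?_
  have hrescaled :
      bind₁ (fun s => C (c ^ w₁ s) * X s) f = bind₁ (fun s => C (c ^ w₂ s) * X s) f :=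
    MvPolynomial.funext fun x => by simp only [eval_bind₁_C_mul_X, h c hc]
  simpa only [coeff_bind₁_C_mul_X, prod_pow_pow_eq_pow_weight] using
    congrArg (coeff d) hrescaled

end Rescaling

theorem monomial_mem_adjoin_of_weight_eq {ι κ R : Type*} [CommSemiring R] (r : R)
    {d : ι ⊕ κ →₀ ℕ}
    (hd : weight (Sum.elim 1 0 : ι ⊕ κ → ℕ) d = weight (Sum.elim 0 1 : ι ⊕ κ → ℕ) d) :
    monomial d r ∈ Algebra.adjoin R
      (Set.range fun p : ι × κ => X (Sum.inl p.1) * X (Sum.inr p.2) :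
        Set (MvPolynomial (ι ⊕ κ) R)) := by
  induction hN : weight (Sum.elim 1 0 : ι ⊕ κ → ℕ) d generalizing d with
  | zero =>
    obtain rfl : d = 0 := by
      ext (i | j)
      · simpa [hN] using le_weight (Sum.elim 1 0) (s := .inl i) one_ne_zero d
      · simpa [← hd, hN] using le_weight (Sum.elim 0 1) (s := .inr j) one_ne_zero d
    exact monomial_zero' (σ := ι ⊕ κ) (R := R) ▸ Subalgebra.algebraMap_mem _ r
  | succ N ih =>
    obtain ⟨i, hi⟩ := exists_inl_ne_zero_of_weight_ne_zero (d := d) (by omega)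
    obtain ⟨j, hj⟩ := exists_inr_ne_zero_of_weight_ne_zero (d := d) (by omega)
    set d' := d - single (.inl i) 1 - single (.inr j) 1
    have hj' : (d - single (Sum.inl i) 1 : ι ⊕ κ →₀ ℕ) (Sum.inr j) ≠ 0 := by simpa using hj
    have hweight (w : ι ⊕ κ → ℕ) : weight w d = weight w d' + w (.inr j) + w (.inl i) := by
      rw [weight_sub_single_add hj', weight_sub_single_add hi]
    have hmonomial : monomial d r = monomial d' r * (X (.inl i) * X (.inr j)) := by
      conv_lhs => rw [← sub_add_single_one_cancel hi, ← sub_add_single_one_cancel hj']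
      simp only [X, monomial_mul, mul_one]
      rw [add_assoc, add_comm (single _ _)]
    rw [hmonomial]
    refine mul_mem (ih ?_ ?_) (Algebra.subset_adjoin ⟨(i, j), rfl⟩)
    all_goals
      have h₁ := hweight (Sum.elim 1 0)
      have h₂ := hweight (Sum.elim 0 1)
      simp only [Sum.elim_inl, Sum.elim_inr, Pi.one_apply, Pi.zero_apply] at h₁ h₂
      omega

end MvPolynomial

/-- Over an infinite field, a polynomial function on `V × W` invariant under the
`GL(1)`-action `λ·(v,w) = (λv, λ⁻¹w)` lies in the subalgebra generated by the
bilinear functions `(v,w) ↦ x_i(v)·y_j(w)`; i.e. the invariant ring is the image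
of the pullback along the tensor map `V × W → V ⊗ W`. -/
theorem GL1_invariants_generated_by_bilinear_forms
    {k : Type*} [Field k] [Infinite k] {m n : ℕ}
    (f : MvPolynomial (Fin m ⊕ Fin n) k)
    (hinv : ∀ lam : k, lam ≠ 0 → ∀ (v : Fin m → k) (w : Fin n → k),
      eval (Sum.elim (lam • v) (lam⁻¹ • w)) f = eval (Sum.elim v w) f) :
    f ∈ Algebra.adjoin k
      (Set.range fun p : Fin m × Fin n =>
        X (Sum.inl p.1) * X (Sum.inr p.2) : Set (MvPolynomial (Fin m ⊕ Fin n) k)) := by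
  have hrescale : ∀ c : k, c ≠ 0 → ∀ x : Fin m ⊕ Fin n → k,
      eval (fun s => c ^ (Sum.elim 1 0 : Fin m ⊕ Fin n → ℕ) s * x s) f =
        eval (fun s => c ^ (Sum.elim 0 1 : Fin m ⊕ Fin n → ℕ) s * x s) f := by
    intro c hc x
    convert hinv c hc (x ∘ Sum.inl) (c • (x ∘ Sum.inr)) using 3 <;>
      funext s <;> rcases s with i | j <;> simp [hc]
  rw [f.as_sum]
  exact Subalgebra.sum_mem _ fun d hd =>
    monomial_mem_adjoin_of_weight_eq _ (weight_eq_of_eval_pow_mul_eq hrescale hd)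
end
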